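/- Given a Nelsonian conditional model M = (W, ≤, R, V⁺, V⁻), define Mⁱ with worlds Wⁱ = W ∪ R, order ≤ⁱ extending ≤ by (w,(X,Y),v) ≤ⁱ (w',(X,Y),v') whenever w ≤ w' and v ≤ v', and relation Rⁱ ⊆ Wⁱ × P(Wⁱ) × Wⁱ consisting of all (w, X', (w,(X,Y),v)) with X'∩W = X and all ((w,(X,Y),v), Y', v) with Y'∩W = Y, for (w,(X,Y),v) ∈ R. Then Mⁱ satisfies the intuitionistic conditional frame conditions (c1-i): ≤ⁱ⁻¹ ∘ Rⁱ_Ξ ⊆ Rⁱ_Ξ ∘ ≤ⁱ⁻¹ and (c2-i): Rⁱ_Ξ ∘ ≤ⁱ ⊆ ≤ⁱ ∘ Rⁱ_Ξ, for every Ξ ⊆ Wⁱ. -/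

import Mathlib

inductive CForm : Type where
  | var : Nat → CForm
  | and : CForm → CForm → CForm
  | or  : CForm → CForm → CForm
  | neg : CForm → CForm
  | imp : CForm → CForm → CForm
  | cond : CForm → CForm → CForm

/-- A Nelsonian conditional model: a Nelsonian model together with a
bi-set-indexed accessibility relation satisfying (c1) and (c2). -/
structure CNModel where
  W : Type
  le : W → W → Prop
  refl : ∀ w, le w w
  trans : ∀ {a b c}, le a b → le b c → le a c
  Vp : Nat → W → Prop
  Vn : Nat → W → Prop
  monoP : ∀ (n : Nat) {w v}, le w v → Vp n w → Vp n v
  monoN : ∀ (n : Nat) {w v}, le w v → Vn n w → Vn n v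
  R : W → Set W × Set W → W → Prop
  c1 : ∀ (XY : Set W × Set W) {w w' v}, le w w' → R w XY v → ∃ v', R w' XY v' ∧ le v v'
  c2 : ∀ (XY : Set W × Set W) {w v v'}, R w XY v → le v v' → ∃ w', le w w' ∧ R w' XY v'

/-- Verification (`true`) and falsification (`false`) in a Nelsonian conditional model. -/
def CNModel.sat (M : CNModel) : CForm → Bool → M.W → Prop
  | .var n, true, w => M.Vp n w
  | .var n, false, w => M.Vn n w
  | .and φ ψ, true, w => M.sat φ true w ∧ M.sat ψ true w
  | .and φ ψ, false, w => M.sat φ false w ∨ M.sat ψ false w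
  | .or φ ψ, true, w => M.sat φ true w ∨ M.sat ψ true w
  | .or φ ψ, false, w => M.sat φ false w ∧ M.sat ψ false w
  | .neg φ, b, w => M.sat φ (!b) w
  | .imp φ ψ, true, w => ∀ v, M.le w v → M.sat φ true v → M.sat ψ true v
  | .imp φ ψ, false, w => M.sat φ true w ∧ M.sat ψ false w
  | .cond φ ψ, true, w =>
      ∀ v u, M.le w v → M.R v ({x | M.sat φ true x}, {x | M.sat φ false x}) u →
        M.sat ψ true u
  | .cond φ ψ, false, w =>
      ∃ u, M.R w ({x | M.sat φ true x}, {x | M.sat φ false x}) u ∧ M.sat ψ false u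

/-- N4CK-validity: verified at every world of every Nelsonian conditional model. -/
def CValid (φ : CForm) : Prop := ∀ (M : CNModel) (w : M.W), M.sat φ true w

variable (M : CNModel)

/-- The worlds of `Mⁱ`: the worlds of `M` together with the triples in `R`. -/
def Wi (M : CNModel) : Type :=
  M.W ⊕ {t : M.W × (Set M.W × Set M.W) × M.W // M.R t.1 t.2.1 t.2.2}

/-- The order of `Mⁱ`. -/
def leI (M : CNModel) : Wi M → Wi M → Prop
  | .inl w, .inl v => M.le w v
  | .inr t, .inr s => t.1.2.1 = s.1.2.1 ∧ M.le t.1.1 s.1.1 ∧ M.le t.1.2.2 s.1.2.2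
  | _, _ => False

/-- The single-set-indexed accessibility relation of `Mⁱ`. -/
def RI (M : CNModel) : Wi M → Set (Wi M) → Wi M → Prop := fun a Ξ b =>
  (∃ t : {t : M.W × (Set M.W × Set M.W) × M.W // M.R t.1 t.2.1 t.2.2},
      a = .inl t.1.1 ∧ b = .inr t ∧ {x : M.W | Sum.inl x ∈ Ξ} = t.1.2.1.1) ∨
  (∃ t : {t : M.W × (Set M.W × Set M.W) × M.W // M.R t.1 t.2.1 t.2.2},
      a = .inr t ∧ b = .inl t.1.2.2 ∧ {x : M.W | Sum.inl x ∈ Ξ} = t.1.2.1.2)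

/-! An `Rⁱ`-step either enters a triple `(w,(X,Y),v)` from `w` or leaves it towards `v`. Moving
along `≤ⁱ` at the source of an entering step, or at the target of a leaving step, is answered by
(c1), resp. (c2), of `M`. In the remaining two cases the move happens at a triple, and the order
`≤ⁱ` between triples keeps `(X,Y)` fixed, so the step is simply taken from the new triple. -/

section
variable {M : CNModel} {Ξ : Set (Wi M)}

theorem RI_inl_inr {w v : M.W} {XY : Set M.W × Set M.W} (h : M.R w XY v)
    (hX : {x : M.W | Sum.inl x ∈ Ξ} = XY.1) : RI M (.inl w) Ξ (.inr ⟨(w, XY, v), h⟩) :=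
  Or.inl ⟨_, rfl, rfl, hX⟩

theorem RI_inr_inl {w v : M.W} {XY : Set M.W × Set M.W} (h : M.R w XY v)
    (hY : {x : M.W | Sum.inl x ∈ Ξ} = XY.2) : RI M (.inr ⟨(w, XY, v), h⟩) Ξ (.inl v) :=
  Or.inr ⟨_, rfl, rfl, hY⟩

theorem exists_RI_leI_of_leI_RI {a b c : Wi M} (hba : leI M b a) (hbc : RI M b Ξ c) :
    ∃ c', RI M a Ξ c' ∧ leI M c c' := by
  rcases hbc with ⟨⟨⟨w, XY, v⟩, h⟩, rfl, rfl, hX⟩ | ⟨t, rfl, rfl, hY⟩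
  · cases a with
    | inl w' =>
      obtain ⟨v', h', hv⟩ := M.c1 XY hba h
      exact ⟨_, RI_inl_inr h' hX, rfl, hba, hv⟩
    | inr _ => exact hba.elim
  · cases a with
    | inl _ => exact hba.elim
    | inr s => exact ⟨_, RI_inr_inl s.2 (hba.1 ▸ hY), hba.2.2⟩

theorem exists_leI_RI_of_RI_leI {a b c : Wi M} (hab : RI M a Ξ b) (hbc : leI M b c) :
    ∃ a', leI M a a' ∧ RI M a' Ξ c := by
  rcases hab with ⟨t, rfl, rfl, hX⟩ | ⟨⟨⟨w, XY, v⟩, h⟩, rfl, rfl, hY⟩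
  · cases c with
    | inl _ => exact hbc.elim
    | inr s => exact ⟨.inl s.1.1, hbc.2.1, RI_inl_inr s.2 (hbc.1 ▸ hX)⟩
  · cases c with
    | inl v' =>
      obtain ⟨w', hw, h'⟩ := M.c2 XY h hbc
      exact ⟨.inr ⟨(w', XY, v'), h'⟩, ⟨rfl, hw, hbc⟩, RI_inr_inl h' hY⟩
    | inr _ => exact hbc.elim

end

theorem Mi_frame_conditions (M : CNModel) (Ξ : Set (Wi M)) :
    (∀ {a b c : Wi M}, leI M b a → RI M b Ξ c → ∃ c', RI M a Ξ c' ∧ leI M c c') ∧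
    (∀ {a b c : Wi M}, RI M a Ξ b → leI M b c → ∃ a', leI M a a' ∧ RI M a' Ξ c) :=
  ⟨exists_RI_leI_of_leI_RI, exists_leI_RI_of_RI_leI⟩
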